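/- Let a, b > 0, ω̃ = (1/√a + 1/√b)/2, and let C : ℝ → ℝ be the solution of x'' + a·x⁺ − b·x⁻ = 0 with x(0) = 1, x'(0) = 0. Then C is periodic with period 2πω̃: C(t + 2πω̃) = C(t) for all t ∈ ℝ. -/

import Mathlib

/-!
In the phase plane the equation is the autonomous system `(x, y)' = (y, b x⁻ - a x⁺)`, whose
right-hand side is Lipschitz; hence solutions are unique, and a solution that returns to its initial
state is periodic. Starting from `(1, 0)` the orbit is glued from explicit arcs: `cos (√a t)` up to
the first zero, half an oscillation `-(√a/√b) sin (√b (t - π/(2√a)))` in `x ≤ 0`, and a last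
quarter of frequency `√a` back to `(1, 0)`. This takes time `π/√a + π/√b = 2πω̃`.
-/

open Real Set

section Autonomous

variable {E : Type*} [NormedAddCommGroup E] [NormedSpace ℝ E] {F : E → E} {K : NNReal}
  {f g : ℝ → E}

lemma eq_of_hasDerivAt_of_lipschitzWith (hF : LipschitzWith K F) {s e : ℝ} (hse : s ≤ e)
    (hf : ∀ t ∈ Icc s e, HasDerivAt f (F (f t)) t) (hg : ∀ t ∈ Icc s e, HasDerivAt g (F (g t)) t)
    (hs : f s = g s) : f e = g e :=
  ODE_solution_unique (v := fun _ => F) (fun _ => hF)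
    (HasDerivAt.continuousOn fun t ht => hf t ht)
    (fun t ht => (hf t (Ico_subset_Icc_self ht)).hasDerivWithinAt)
    (HasDerivAt.continuousOn fun t ht => hg t ht)
    (fun t ht => (hg t (Ico_subset_Icc_self ht)).hasDerivWithinAt) hs ⟨hse, le_rfl⟩

lemma periodic_of_hasDerivAt_of_lipschitzWith (hF : LipschitzWith K F)
    (hf : ∀ t, HasDerivAt f (F (f t)) t) {T : ℝ} (hT : f T = f 0) : Function.Periodic f T :=
  congrFun <| ODE_solution_unique_univ (v := fun _ => F) (s := fun _ => univ) (t₀ := 0)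
    (fun _ => hF.lipschitzOnWith)
    (fun t => ⟨(hf (t + T)).comp_add_const t T, trivial⟩) (fun t => ⟨hf t, trivial⟩)
    (by simpa using hT)

end Autonomous

def asymOscField (a b : ℝ) (p : ℝ × ℝ) : ℝ × ℝ :=
  (p.2, b * max (-p.1) 0 - a * max p.1 0)

lemma lipschitzWith_asymOscField (a b : ℝ) :
    LipschitzWith (max 1 (‖b‖₊ + ‖a‖₊)) (asymOscField a b) :=
  LipschitzWith.prod_snd.prodMk <| by
    simpa only [mul_one, Function.comp_def, smul_eq_mul, Pi.neg_apply] using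
      ((lipschitzWith_smul b).comp (LipschitzWith.prod_fst.neg.max_const 0)).sub
        ((lipschitzWith_smul a).comp (LipschitzWith.prod_fst.max_const 0))

lemma asymOscField_neg (a b : ℝ) (p : ℝ × ℝ) :
    asymOscField a b (-p) = -asymOscField b a p := by
  simp only [asymOscField, Prod.fst_neg, Prod.snd_neg, neg_neg, Prod.neg_mk, neg_sub]

lemma hasDerivAt_phase_of_asymOsc {a b : ℝ} {C : ℝ → ℝ} (hC1 : Differentiable ℝ C)
    (hC2 : Differentiable ℝ (deriv C))
    (hode : ∀ t, deriv (deriv C) t + a * max (C t) 0 - b * max (-(C t)) 0 = 0) (t : ℝ) :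
    HasDerivAt (fun t => (C t, deriv C t)) (asymOscField a b (C t, deriv C t)) t := by
  have hC'' : deriv (deriv C) t = b * max (-(C t)) 0 - a * max (C t) 0 := by linarith [hode t]
  exact (hC1 t).hasDerivAt.prodMk (hC'' ▸ (hC2 t).hasDerivAt)

noncomputable def cosArc (A ω t : ℝ) : ℝ × ℝ := (A * cos (ω * t), -(A * ω * sin (ω * t)))

lemma cosArc_zero (A ω : ℝ) : cosArc A ω 0 = (A, 0) := by simp [cosArc]

lemma cosArc_eq_of_mul_eq_pi_div_two (A : ℝ) {ω t : ℝ} (h : ω * t = π / 2) :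
    cosArc A ω t = (0, -(A * ω)) := by
  simp [cosArc, h]

lemma cosArc_neg_eq_of_mul_eq_pi_div_two (A : ℝ) {ω t : ℝ} (h : ω * t = π / 2) :
    cosArc A ω (-t) = (0, A * ω) := by
  simp [cosArc, h]

lemma hasDerivAt_cosArc {a b A ω t : ℝ} (hω : ω ^ 2 = a) (hA : 0 ≤ A)
    (ht : 0 ≤ cos (ω * t)) :
    HasDerivAt (cosArc A ω) (asymOscField a b (cosArc A ω t)) t := by
  have hx : 0 ≤ A * cos (ω * t) := mul_nonneg hA ht
  have hfield : asymOscField a b (cosArc A ω t) =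
      (-(A * ω * sin (ω * t)), -(a * (A * cos (ω * t)))) := by
    simp only [asymOscField, cosArc, max_eq_left hx, max_eq_right (neg_nonpos.mpr hx), mul_zero,
      zero_sub]
  rw [hfield, ← hω]
  have hθ : HasDerivAt (fun t => ω * t) ω t := by simpa using (hasDerivAt_id t).const_mul ω
  refine (hθ.cos.const_mul A).prodMk ((hθ.sin.const_mul (A * ω)).neg) |>.congr_deriv ?_
  ext <;> simp only <;> ring

lemma hasDerivAt_neg_cosArc {a b A ω t : ℝ} (hω : ω ^ 2 = b) (hA : 0 ≤ A)
    (ht : 0 ≤ cos (ω * t)) :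
    HasDerivAt (-cosArc A ω) (asymOscField a b (-cosArc A ω t)) t := by
  simpa only [Pi.neg_apply, asymOscField_neg] using (hasDerivAt_cosArc (b := a) hω hA ht).neg

lemma cos_mul_nonneg_of_abs_le {ω t : ℝ} (hω : 0 < ω) (ht : |t| ≤ π / 2 / ω) :
    0 ≤ cos (ω * t) := by
  have hωt : |ω * t| ≤ π / 2 := by
    rw [abs_mul, abs_of_pos hω, mul_comm, ← le_div_iff₀ hω]
    exact ht
  exact cos_nonneg_of_mem_Icc (abs_le.mp hωt)

lemma asymOsc_returns_to_start {a b : ℝ} (ha : 0 < a) (hb : 0 < b) {g : ℝ → ℝ × ℝ}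
    (hg : ∀ t, HasDerivAt g (asymOscField a b (g t)) t) (h0 : g 0 = (1, 0)) :
    g (π / √a + π / √b) = (1, 0) := by
  set α := √a
  set β := √b
  have hα : 0 < α := sqrt_pos.2 ha
  have hβ : 0 < β := sqrt_pos.2 hb
  have hF := lipschitzWith_asymOscField a b
  set τ := π / 2 / α
  set σ := π / 2 / β
  have hτ : 0 < τ := by positivity
  have hσ : 0 < σ := by positivity
  have hατ : α * τ = π / 2 := mul_div_cancel₀ _ hα.ne'
  have hβσ : β * σ = π / 2 := mul_div_cancel₀ _ hβ.ne'
  have arc₁ : ∀ t ∈ Icc 0 τ, HasDerivAt (cosArc 1 α) (asymOscField a b (cosArc 1 α t)) t :=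
    fun t ht => hasDerivAt_cosArc (sq_sqrt ha.le) zero_le_one
      (cos_mul_nonneg_of_abs_le hα (abs_le.2 ⟨by linarith [ht.1], ht.2⟩))
  have arc₂ : ∀ t ∈ Icc τ (τ + 2 * σ),
      HasDerivAt (fun t => -cosArc (α / β) β (t - (τ + σ)))
        (asymOscField a b (-cosArc (α / β) β (t - (τ + σ)))) t :=
    fun t ht => (hasDerivAt_neg_cosArc (sq_sqrt hb.le) (by positivity)
      (cos_mul_nonneg_of_abs_le hβ (abs_le.2 ⟨by linarith [ht.1], by linarith [ht.2]⟩))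
      ).comp_sub_const t _
  have arc₃ : ∀ t ∈ Icc (τ + 2 * σ) (τ + 2 * σ + τ),
      HasDerivAt (fun t => cosArc 1 α (t - (τ + 2 * σ + τ)))
        (asymOscField a b (cosArc 1 α (t - (τ + 2 * σ + τ)))) t :=
    fun t ht => (hasDerivAt_cosArc (sq_sqrt ha.le) zero_le_one
      (cos_mul_nonneg_of_abs_le hα (abs_le.2 ⟨by linarith [ht.1], by linarith [ht.2]⟩))
      ).comp_sub_const t _
  have e₁ : g τ = (0, -α) := by
    rw [eq_of_hasDerivAt_of_lipschitzWith hF hτ.le (fun t _ => hg t) arc₁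
      (by rw [h0, cosArc_zero]), cosArc_eq_of_mul_eq_pi_div_two _ hατ, one_mul]
  have e₂ : g (τ + 2 * σ) = (0, α) := by
    rw [eq_of_hasDerivAt_of_lipschitzWith hF (by linarith) (fun t _ => hg t) arc₂
      (by rw [e₁, show τ - (τ + σ) = -σ by ring, cosArc_neg_eq_of_mul_eq_pi_div_two _ hβσ,
        div_mul_cancel₀ _ hβ.ne', Prod.neg_mk, neg_zero]),
      show τ + 2 * σ - (τ + σ) = σ by ring, cosArc_eq_of_mul_eq_pi_div_two _ hβσ,
      div_mul_cancel₀ _ hβ.ne', Prod.neg_mk, neg_zero, neg_neg]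
  rw [show π / α + π / β = τ + 2 * σ + τ by ring,
    eq_of_hasDerivAt_of_lipschitzWith hF (by linarith) (fun t _ => hg t) arc₃
      (by rw [e₂, show τ + 2 * σ - (τ + 2 * σ + τ) = -τ by ring,
        cosArc_neg_eq_of_mul_eq_pi_div_two _ hατ, one_mul]),
    sub_self, cosArc_zero]

/-- The solution `C` of the asymmetric oscillator is periodic with period
`2π ω̃`, where `ω̃ = (1/√a + 1/√b)/2`. -/
theorem stmt_3 (a b : ℝ) (ha : 0 < a) (hb : 0 < b) (C : ℝ → ℝ)
    (ω' : ℝ) (hω : ω' = (1 / Real.sqrt a + 1 / Real.sqrt b) / 2)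
    (hC1 : Differentiable ℝ C) (hC2 : Differentiable ℝ (deriv C))
    (hode : ∀ t : ℝ, deriv (deriv C) t + a * max (C t) 0 - b * max (-(C t)) 0 = 0)
    (hinit0 : C 0 = 1) (hinit1 : deriv C 0 = 0) :
    ∀ t : ℝ, C (t + 2 * π * ω') = C t := by
  have hphase := hasDerivAt_phase_of_asymOsc hC1 hC2 hode
  have hstart : (C 0, deriv C 0) = (1, 0) := by rw [hinit0, hinit1]
  have hperiodic := periodic_of_hasDerivAt_of_lipschitzWith (lipschitzWith_asymOscField a b)
    hphase ((asymOsc_returns_to_start ha hb hphase hstart).trans hstart.symm)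
  intro t
  rw [show 2 * π * ω' = π / √a + π / √b by rw [hω]; ring]
  exact congrArg Prod.fst (hperiodic t)
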